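/- Let n ≥ 3 and suppose a_n ≥ 2 and a_{n+1} ≥ 2. Then q_n − q_{n-1} and q_n + q_{n-1} are two successive elements of 𝔔(α). -/

import Mathlib

open Filter Real Set

/-- Iterates of the Gauss map starting from `α`: `x₀ = α`, `x_{n+1} = 1 / fract (xₙ)`. -/
noncomputable def gaussIter (α : ℝ) : ℕ → ℝ
  | 0 => α
  | n + 1 => (Int.fract (gaussIter α n))⁻¹

/-- Partial quotients of the continued fraction `α = [a₀; a₁, a₂, …]`. -/
noncomputable def cfA (α : ℝ) (n : ℕ) : ℤ := ⌊gaussIter α n⌋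

/-- Denominators of convergents, with shifted index: `cfQ α 0 = q₋₁ = 0`,
`cfQ α 1 = q₀ = 1`, and `cfQ α (n+1) = qₙ` where `qₙ = aₙ q_{n-1} + q_{n-2}`. -/
noncomputable def cfQ (α : ℝ) : ℕ → ℤ
  | 0 => 0
  | 1 => 1
  | n + 2 => cfA α (n + 1) * cfQ α (n + 1) + cfQ α n

/-- Numerators of convergents, with shifted index: `cfP α 0 = p₋₁ = 1`,
`cfP α 1 = p₀ = ⌊α⌋`, and `cfP α (n+1) = pₙ` where `pₙ = aₙ p_{n-1} + p_{n-2}`. -/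
noncomputable def cfP (α : ℝ) : ℕ → ℤ
  | 0 => 1
  | 1 => ⌊α⌋
  | n + 2 => cfA α (n + 1) * cfP α (n + 1) + cfP α n

/-- `qₙ`, the denominator of the `n`-th convergent of `α`. -/
noncomputable def cfDen (α : ℝ) (n : ℕ) : ℤ := cfQ α (n + 1)

/-- `pₙ`, the numerator of the `n`-th convergent of `α`. -/
noncomputable def cfNum (α : ℝ) (n : ℕ) : ℤ := cfP α (n + 1)

/-- `ξₙ = |qₙ α − pₙ|`. -/
noncomputable def cfXi (α : ℝ) (n : ℕ) : ℝ := |(cfDen α n : ℝ) * α - (cfNum α n : ℝ)|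

/-- `ψ_α(t) = min { ‖qα‖ : q ∈ ℤ, 1 ≤ q ≤ t }`. -/
noncomputable def psiFn (α t : ℝ) : ℝ :=
  sInf {x : ℝ | ∃ p q : ℤ, 1 ≤ q ∧ (q : ℝ) ≤ t ∧ x = |(q : ℝ) * α - (p : ℝ)|}

/-- `ψ_α^[2](t)`: the same minimum but over pairs `(p,q)` that are not `(pₙ,qₙ)` for any `n ≥ 0`. -/
noncomputable def psi2Fn (α t : ℝ) : ℝ :=
  sInf {x : ℝ | ∃ p q : ℤ, 1 ≤ q ∧ (q : ℝ) ≤ t ∧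
    (∀ n : ℕ, ¬(p = cfNum α n ∧ q = cfDen α n)) ∧ x = |(q : ℝ) * α - (p : ℝ)|}

/-- `ψ_α^[2]*(t)`: the same minimum but over pairs `(p,q)` with `p/q ≠ pₙ/qₙ` for all `n ≥ 0`. -/
noncomputable def psi2sFn (α t : ℝ) : ℝ :=
  sInf {x : ℝ | ∃ p q : ℤ, 1 ≤ q ∧ (q : ℝ) ≤ t ∧
    (∀ n : ℕ, (p : ℝ) / (q : ℝ) ≠ (cfNum α n : ℝ) / (cfDen α n : ℝ)) ∧
    x = |(q : ℝ) * α - (p : ℝ)|}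

/-- `λ(α) = liminf_{t→∞} t · ψ_α(t)`. -/
noncomputable def lamOf (α : ℝ) : ℝ := Filter.liminf (fun t : ℝ => t * psiFn α t) Filter.atTop

/-- `𝔨(α) = liminf_{t→∞} t · ψ_α^[2](t)`. -/
noncomputable def kOf (α : ℝ) : ℝ := Filter.liminf (fun t : ℝ => t * psi2Fn α t) Filter.atTop

/-- `𝔨*(α) = liminf_{t→∞} t · ψ_α^[2]*(t)`. -/
noncomputable def ksOf (α : ℝ) : ℝ := Filter.liminf (fun t : ℝ => t * psi2sFn α t) Filter.atTop

/-- `α` and `β` are equivalent: `β = (aα+b)/(cα+d)` with `a,b,c,d ∈ ℤ`, `|ad − bc| = 1`. -/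
def CFEquiv (α β : ℝ) : Prop :=
  ∃ a b c d : ℤ, |a * d - b * c| = 1 ∧ β = ((a : ℝ) * α + (b : ℝ)) / ((c : ℝ) * α + (d : ℝ))

/-- The spectrum `𝕃₂ = {𝔨(α) : α irrational}`. -/
def L2 : Set ℝ := {x : ℝ | ∃ α : ℝ, Irrational α ∧ kOf α = x}

/-- The spectrum `𝕃₂* = {𝔨*(α) : α irrational}`. -/
def L2s : Set ℝ := {x : ℝ | ∃ α : ℝ, Irrational α ∧ ksOf α = x}

/-- `𝔔(α)`: the set of positive integers at which `ψ_α^[2]` is discontinuous. -/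
def QSet (α : ℝ) : Set ℤ := {m : ℤ | 0 < m ∧ ¬ ContinuousAt (psi2Fn α) (m : ℝ)}

/-- `𝔛(α)`: the set of positive integers at which `ψ_α^[2]*` is discontinuous. -/
def XSet (α : ℝ) : Set ℤ := {m : ℤ | 0 < m ∧ ¬ ContinuousAt (psi2sFn α) (m : ℝ)}

/-- The members of the list `l` are successive elements of `S`: they belong to `S`,
are listed in increasing order, and no element of `S` lies strictly between
consecutive listed ones. -/
def SuccessiveIn (S : Set ℤ) (l : List ℤ) : Prop :=
  (∀ x ∈ l, x ∈ S) ∧ l.Chain' (fun x y => x < y ∧ ∀ z ∈ S, ¬(x < z ∧ z < y))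

/-- `κ¹ₙ = (q_{n-2} + q_{n-1})(ξ_{n-2} − ξ_{n-1})`. -/
noncomputable def kap1 (α : ℝ) (n : ℕ) : ℝ :=
  ((cfDen α (n - 2) + cfDen α (n - 1) : ℤ) : ℝ) * (cfXi α (n - 2) - cfXi α (n - 1))

/-- `κ²ₙ = (qₙ − q_{n-1})(ξ_{n-1} + ξₙ)`. -/
noncomputable def kap2 (α : ℝ) (n : ℕ) : ℝ :=
  ((cfDen α n - cfDen α (n - 1) : ℤ) : ℝ) * (cfXi α (n - 1) + cfXi α n)

/-- `κ³ₙ = (2q_{n-2} + q_{n-1})(2ξ_{n-2} − ξ_{n-1})`. -/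
noncomputable def kap3 (α : ℝ) (n : ℕ) : ℝ :=
  ((2 * cfDen α (n - 2) + cfDen α (n - 1) : ℤ) : ℝ) * (2 * cfXi α (n - 2) - cfXi α (n - 1))

/-- `κ⁴ₙ = 4 q_{n-1} ξ_{n-1}`. -/
noncomputable def kap4 (α : ℝ) (n : ℕ) : ℝ :=
  ((4 * cfDen α (n - 1) : ℤ) : ℝ) * cfXi α (n - 1)

/-!
Every `(p, q)` is an integer combination `u (pₙ₋₁, qₙ₋₁) + v (pₙ, qₙ)` of two consecutive
convergents, and since `qₙ₋₁ α - pₙ₋₁` and `qₙ α - pₙ` have opposite signs,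
`|q α - p| = |u ξₙ₋₁ - v ξₙ|`. For `1 ≤ q < qₙ + qₙ₋₁` and `(p, q)` not a convergent, the
only coefficients giving less than `ξₙ₋₁ + 2 ξₙ` are `(u, v) = (-1, 1)` (here `aₙ₊₁ ≥ 2`
gives `ξₙ₋₁ ≥ 2 ξₙ`), i.e. `q = qₙ - qₙ₋₁`, with value `ξₙ₋₁ + ξₙ`. So `ψ^[2]` is at least
`ξₙ₋₁ + 2 ξₙ` before `qₙ - qₙ₋₁`, equals `ξₙ₋₁ + ξₙ` on `[qₙ - qₙ₋₁, qₙ + qₙ₋₁)`, and drops to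
at most `ξₙ₋₁ - ξₙ` at `qₙ + qₙ₋₁`, the combination `(1, 1)`. The condition `aₙ ≥ 2` puts
`qₙ - qₙ₋₁` strictly between `qₙ₋₁` and `qₙ`, so that pair is not a convergent.
-/

open Filter Topology

/-- `cfErr α (k + 1) = qₖ α - pₖ`, with the index shift of `cfQ` and `cfP`. -/
noncomputable def cfErr (α : ℝ) (k : ℕ) : ℝ := (cfQ α k : ℝ) * α - (cfP α k : ℝ)

def IsConvergentPair (α : ℝ) (p q : ℤ) : Prop := ∃ j, p = cfNum α j ∧ q = cfDen α j

section ContinuedFraction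

variable {α : ℝ}

theorem irrational_gaussIter (hα : Irrational α) : ∀ k, Irrational (gaussIter α k)
  | 0 => hα
  | k + 1 => ((irrational_gaussIter hα k).sub_intCast _).inv

theorem fract_gaussIter_pos (hα : Irrational α) (k : ℕ) : 0 < Int.fract (gaussIter α k) :=
  (Int.fract_nonneg _).lt_of_ne fun h =>
    (irrational_gaussIter hα k).ne_int ⌊gaussIter α k⌋ (sub_eq_zero.1 h.symm)

theorem gaussIter_succ (k : ℕ) : gaussIter α (k + 1) = (Int.fract (gaussIter α k))⁻¹ := rfl

theorem one_le_cfA (hα : Irrational α) (k : ℕ) : 1 ≤ cfA α (k + 1) := by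
  refine Int.le_floor.2 (le_of_lt ?_)
  rw [Int.cast_one, gaussIter_succ, one_lt_inv₀ (fract_gaussIter_pos hα k)]
  exact Int.fract_lt_one _

theorem cfQ_add_two (k : ℕ) : cfQ α (k + 2) = cfA α (k + 1) * cfQ α (k + 1) + cfQ α k := rfl

theorem cfP_add_two (k : ℕ) : cfP α (k + 2) = cfA α (k + 1) * cfP α (k + 1) + cfP α k := rfl

theorem cfQ_nonneg (hα : Irrational α) : ∀ k, 0 ≤ cfQ α k
  | 0 => le_rfl
  | 1 => zero_le_one
  | k + 2 => by
    rw [cfQ_add_two]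
    exact add_nonneg (mul_nonneg (by linarith [one_le_cfA hα k]) (cfQ_nonneg hα (k + 1)))
      (cfQ_nonneg hα k)

theorem monotone_cfQ (hα : Irrational α) : Monotone (cfQ α) := by
  refine monotone_nat_of_le_succ fun k => ?_
  cases k with
  | zero => exact zero_le_one
  | succ k =>
    rw [cfQ_add_two]
    exact le_add_of_le_of_nonneg (le_mul_of_one_le_left (cfQ_nonneg hα _) (one_le_cfA hα k))
      (cfQ_nonneg hα k)

theorem one_le_cfQ (hα : Irrational α) {k : ℕ} (hk : 1 ≤ k) : 1 ≤ cfQ α k :=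
  monotone_cfQ hα hk

theorem not_isConvergentPair_of_lt_of_lt (hα : Irrational α) {k : ℕ} {p x : ℤ}
    (h₁ : cfQ α k < x) (h₂ : x < cfQ α (k + 1)) : ¬IsConvergentPair α p x := by
  rintro ⟨j, -, rfl⟩
  rcases le_or_gt (j + 1) k with h | h
  · exact (monotone_cfQ hα h).not_gt h₁
  · exact (monotone_cfQ hα h).not_gt h₂

theorem cfP_succ_mul_cfQ_sub (k : ℕ) :
    cfP α (k + 1) * cfQ α k - cfP α k * cfQ α (k + 1) = (-1) ^ (k + 1) := by
  induction k with
  | zero => simp [cfP, cfQ]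
  | succ k ih =>
    rw [cfP_add_two, cfQ_add_two, pow_succ]
    linarith

theorem exists_eq_comb_cfP_cfQ (k : ℕ) (p q : ℤ) :
    ∃ u v : ℤ, p = u * cfP α k + v * cfP α (k + 1) ∧ q = u * cfQ α k + v * cfQ α (k + 1) := by
  set d : ℤ := (-1) ^ (k + 1)
  have hdd : d * d = 1 := by rw [← mul_pow]; norm_num
  refine ⟨d * (cfP α (k + 1) * q - cfQ α (k + 1) * p), d * (cfQ α k * p - cfP α k * q), ?_, ?_⟩
  · linear_combination (-d * p) * cfP_succ_mul_cfQ_sub (α := α) k - p * hdd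
  · linear_combination (-d * q) * cfP_succ_mul_cfQ_sub (α := α) k - q * hdd

theorem cfErr_zero : cfErr α 0 = -1 := by simp [cfErr, cfQ, cfP]

theorem cfErr_add_two (k : ℕ) :
    cfErr α (k + 2) = cfA α (k + 1) * cfErr α (k + 1) + cfErr α k := by
  simp only [cfErr, cfQ_add_two, cfP_add_two]
  push_cast
  ring

theorem cfErr_succ (hα : Irrational α) :
    ∀ k, cfErr α (k + 1) = -Int.fract (gaussIter α k) * cfErr α k
  | 0 => by
    rw [cfErr_zero]
    simp only [cfErr, cfQ, cfP, gaussIter, Int.fract]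
    push_cast
    ring
  | k + 1 => by
    have hf := (fract_gaussIter_pos hα k).ne'
    have hfract : Int.fract (gaussIter α (k + 1)) =
        (Int.fract (gaussIter α k))⁻¹ - cfA α (k + 1) := rfl
    rw [cfErr_add_two, cfErr_succ hα k, hfract]
    field_simp
    ring

theorem abs_cfErr_succ (hα : Irrational α) (k : ℕ) :
    |cfErr α (k + 1)| = Int.fract (gaussIter α k) * |cfErr α k| := by
  rw [cfErr_succ hα, abs_mul, abs_neg, abs_of_pos (fract_gaussIter_pos hα k)]

theorem cfErr_ne_zero (hα : Irrational α) : ∀ k, cfErr α k ≠ 0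
  | 0 => by norm_num [cfErr_zero]
  | k + 1 => by
    rw [cfErr_succ hα]
    exact mul_ne_zero (neg_ne_zero.2 (fract_gaussIter_pos hα k).ne') (cfErr_ne_zero hα k)

theorem cfErr_mul_cfErr_succ_neg (hα : Irrational α) (k : ℕ) :
    cfErr α k * cfErr α (k + 1) < 0 := by
  have := mul_pos (fract_gaussIter_pos hα k) (mul_self_pos.2 (cfErr_ne_zero hα k))
  rw [cfErr_succ hα]
  linarith

theorem strictAnti_abs_cfErr (hα : Irrational α) : StrictAnti fun k => |cfErr α k| :=
  strictAnti_nat_of_succ_lt fun k => by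
    rw [abs_cfErr_succ hα]
    exact mul_lt_of_lt_one_left (abs_pos.2 (cfErr_ne_zero hα k)) (Int.fract_lt_one _)

theorem abs_cfErr_succ_lt_one (hα : Irrational α) (k : ℕ) : |cfErr α (k + 1)| < 1 := by
  simpa [cfErr_zero] using strictAnti_abs_cfErr hα k.succ_pos

theorem two_mul_abs_cfErr_succ_le (hα : Irrational α) {k : ℕ} (ha : 2 ≤ cfA α (k + 1)) :
    2 * |cfErr α (k + 1)| ≤ |cfErr α k| := by
  set f := Int.fract (gaussIter α k)
  have hf : 0 < f := fract_gaussIter_pos hα k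
  have h2 : (2 : ℝ) ≤ f⁻¹ := (Int.cast_le.2 ha).trans (Int.floor_le (gaussIter α (k + 1)))
  have h2f : 2 * f ≤ 1 := by nlinarith [mul_inv_cancel₀ hf.ne']
  rw [abs_cfErr_succ hα]
  nlinarith [abs_nonneg (cfErr α k)]

end ContinuedFraction

theorem abs_mul_add_mul_of_mul_neg {R : Type*} [CommRing R] [LinearOrder R]
    [IsStrictOrderedRing R] {x y : R} (h : x * y < 0) (u v : R) :
    |u * x + v * y| = |u * (|x|) - v * (|y|)| := by
  rcases mul_neg_iff.1 h with ⟨hx, hy⟩ | ⟨hx, hy⟩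
  · rw [abs_of_pos hx, abs_of_neg hy]
    ring_nf
  · rw [abs_of_neg hx, abs_of_pos hy, ← abs_neg]
    ring_nf

theorem coeffs_of_one_le_comb_lt_add {Q Q' u v : ℤ} (hQ : 1 ≤ Q) (hQQ' : Q ≤ Q')
    (hq : 1 ≤ u * Q + v * Q') (hq' : u * Q + v * Q' < Q' + Q) (h₁₀ : ¬(u = 1 ∧ v = 0))
    (h₀₁ : ¬(u = 0 ∧ v = 1)) :
    (2 ≤ u ∧ v ≤ 0) ∨ (u ≤ -1 ∧ 1 ≤ v) := by
  rcases le_or_gt v 0 with hv | hv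
  · refine Or.inl ⟨?_, hv⟩
    obtain hu | rfl | hu : u ≤ 0 ∨ u = 1 ∨ 2 ≤ u := by omega
    · nlinarith
    · have : v ≤ -1 := by omega
      nlinarith
    · exact hu
  · refine Or.inr ⟨?_, hv⟩
    obtain hu | rfl | hu : u ≤ -1 ∨ u = 0 ∨ 1 ≤ u := by omega
    · exact hu
    · have : 2 ≤ v := by omega
      nlinarith
    · nlinarith

theorem eq_neg_one_one_or_le_abs {R : Type*} [CommRing R] [LinearOrder R]
    [IsStrictOrderedRing R] {A B : R} {u v : ℤ} (hB : 0 ≤ B) (hAB : 2 * B ≤ A)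
    (huv : (2 ≤ u ∧ v ≤ 0) ∨ (u ≤ -1 ∧ 1 ≤ v)) :
    (u = -1 ∧ v = 1) ∨ A + 2 * B ≤ |u * A - v * B| := by
  rcases huv with ⟨hu, hv⟩ | ⟨hu, hv⟩
  · have hu' : (2 : R) ≤ u := by exact_mod_cast hu
    have hv' : (v : R) ≤ 0 := by exact_mod_cast hv
    exact Or.inr (le_trans (by nlinarith) (le_abs_self _))
  · by_cases h : u = -1 ∧ v = 1
    · exact Or.inl h
    · refine Or.inr (le_trans ?_ (neg_le_abs _))
      have hu' : (u : R) ≤ -1 := by exact_mod_cast hu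
      have hv' : (1 : R) ≤ v := by exact_mod_cast hv
      obtain hu₂ | hv₂ : u ≤ -2 ∨ 2 ≤ v := by omega
      · have : (u : R) ≤ -2 := by exact_mod_cast hu₂
        nlinarith
      · have : (2 : R) ≤ v := by exact_mod_cast hv₂
        nlinarith

theorem not_continuousAt_of_lt_of_eventually {f : ℝ → ℝ} {x c : ℝ} (hfx : f x < c)
    (h : ∀ᶠ t in 𝓝[<] x, c ≤ f t) : ¬ContinuousAt f x := fun hf =>
  hfx.not_ge (ge_of_tendsto (hf.tendsto.mono_left nhdsWithin_le_nhds) h)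

theorem successiveIn_pair_iff {S : Set ℤ} {x y : ℤ} :
    SuccessiveIn S [x, y] ↔ x ∈ S ∧ y ∈ S ∧ x < y ∧ ∀ z ∈ S, ¬(x < z ∧ z < y) := by
  constructor
  · rintro ⟨hS, hchain⟩
    have h := List.isChain_pair.1 hchain
    exact ⟨hS x (by simp), hS y (by simp), h⟩
  · rintro ⟨hx, hy, h⟩
    exact ⟨by simp [hx, hy], List.isChain_pair.2 h⟩

section SecondMinimum

variable {α : ℝ} {n : ℕ}

theorem not_isConvergentPair_floor_sub_one (hα : Irrational α) :
    ¬IsConvergentPair α (⌊α⌋ - 1) 1 := by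
  rintro ⟨j, hp, hq⟩
  have h : |(cfDen α j : ℝ) * α - cfNum α j| < 1 := abs_cfErr_succ_lt_one hα j
  rw [← hp, ← hq, abs_lt] at h
  push_cast at h
  linarith [Int.floor_le α]

theorem psi2Fn_le {p q : ℤ} {t : ℝ} (hq : 1 ≤ q) (ht : (q : ℝ) ≤ t)
    (hpq : ¬IsConvergentPair α p q) : psi2Fn α t ≤ |(q : ℝ) * α - p| :=
  csInf_le ⟨0, by rintro _ ⟨p, q, -, -, -, rfl⟩; exact abs_nonneg _⟩
    ⟨p, q, hq, ht, not_exists.1 hpq, rfl⟩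

theorem le_psi2Fn (hα : Irrational α) {t c : ℝ} (ht : 1 ≤ t)
    (h : ∀ p q : ℤ, 1 ≤ q → (q : ℝ) ≤ t → ¬IsConvergentPair α p q → c ≤ |(q : ℝ) * α - p|) :
    c ≤ psi2Fn α t :=
  le_csInf ⟨_, ⌊α⌋ - 1, 1, le_rfl, by simpa using ht,
      not_exists.1 (not_isConvergentPair_floor_sub_one hα), rfl⟩
    (by rintro _ ⟨p, q, hq, hqt, hpq, rfl⟩; exact h p q hq hqt (not_exists.2 hpq))

theorem cfQ_lt_cfQ_succ_sub (hα : Irrational α) (hn : 2 ≤ n) (ha : 2 ≤ cfA α n) :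
    cfQ α n < cfQ α (n + 1) - cfQ α n := by
  obtain ⟨k, rfl⟩ : ∃ k, n = k + 1 := ⟨n - 1, by omega⟩
  rw [cfQ_add_two]
  nlinarith [one_le_cfQ hα (by omega : 1 ≤ k), one_le_cfQ hα (by omega : 1 ≤ k + 1)]

theorem cfQ_succ_add_lt (hα : Irrational α) (ha : 2 ≤ cfA α (n + 1)) :
    cfQ α (n + 1) + cfQ α n < cfQ α (n + 2) := by
  rw [cfQ_add_two]
  nlinarith [one_le_cfQ hα (Nat.le_add_left 1 n)]

theorem eq_sub_or_le_abs_sub (hα : Irrational α) (hn : 1 ≤ n) (ha : 2 ≤ cfA α (n + 1))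
    {p q : ℤ} (hq : 1 ≤ q) (hq' : q < cfQ α (n + 1) + cfQ α n)
    (hpq : ¬IsConvergentPair α p q) :
    (p = cfP α (n + 1) - cfP α n ∧ q = cfQ α (n + 1) - cfQ α n) ∨
      |cfErr α n| + 2 * |cfErr α (n + 1)| ≤ |(q : ℝ) * α - p| := by
  obtain ⟨u, v, rfl, rfl⟩ := exists_eq_comb_cfP_cfQ (α := α) n p q
  have h₁₀ : ¬(u = 1 ∧ v = 0) := by
    rintro ⟨rfl, rfl⟩
    obtain ⟨k, rfl⟩ := Nat.exists_eq_add_of_le' hn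
    exact hpq ⟨k, by simp [cfNum], by simp [cfDen]⟩
  have h₀₁ : ¬(u = 0 ∧ v = 1) := by
    rintro ⟨rfl, rfl⟩
    exact hpq ⟨n, by simp [cfNum], by simp [cfDen]⟩
  have hcases :=
    coeffs_of_one_le_comb_lt_add (one_le_cfQ hα hn) (monotone_cfQ hα n.le_succ) hq hq' h₁₀ h₀₁
  have hval :
      ((u * cfQ α n + v * cfQ α (n + 1) : ℤ) : ℝ) * α - (u * cfP α n + v * cfP α (n + 1) : ℤ)
      = u * cfErr α n + v * cfErr α (n + 1) := by
    simp only [cfErr]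
    push_cast
    ring
  rw [hval, abs_mul_add_mul_of_mul_neg (cfErr_mul_cfErr_succ_neg hα n)]
  rcases eq_neg_one_one_or_le_abs (abs_nonneg _) (two_mul_abs_cfErr_succ_le hα ha) hcases with
    ⟨rfl, rfl⟩ | h
  · exact Or.inl ⟨by ring, by ring⟩
  · exact Or.inr h

theorem abs_cfQ_sub_mul_sub (hα : Irrational α) :
    |((cfQ α (n + 1) - cfQ α n : ℤ) : ℝ) * α - (cfP α (n + 1) - cfP α n : ℤ)| =
      |cfErr α n| + |cfErr α (n + 1)| := by
  have hval : ((cfQ α (n + 1) - cfQ α n : ℤ) : ℝ) * α - (cfP α (n + 1) - cfP α n : ℤ)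
      = -1 * cfErr α n + 1 * cfErr α (n + 1) := by
    simp only [cfErr]
    push_cast
    ring
  rw [hval, abs_mul_add_mul_of_mul_neg (cfErr_mul_cfErr_succ_neg hα n),
    show -1 * |cfErr α n| - 1 * |cfErr α (n + 1)| = -(|cfErr α n| + |cfErr α (n + 1)|) by ring,
    abs_neg, abs_of_nonneg (by positivity)]

theorem abs_cfQ_add_mul_sub (hα : Irrational α) :
    |((cfQ α (n + 1) + cfQ α n : ℤ) : ℝ) * α - (cfP α (n + 1) + cfP α n : ℤ)| =
      |cfErr α n| - |cfErr α (n + 1)| := by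
  have hval : ((cfQ α (n + 1) + cfQ α n : ℤ) : ℝ) * α - (cfP α (n + 1) + cfP α n : ℤ)
      = 1 * cfErr α n + 1 * cfErr α (n + 1) := by
    simp only [cfErr]
    push_cast
    ring
  rw [hval, abs_mul_add_mul_of_mul_neg (cfErr_mul_cfErr_succ_neg hα n), one_mul, one_mul]
  exact abs_of_pos (sub_pos.2 (strictAnti_abs_cfErr hα n.lt_succ_self))

theorem psi2Fn_eq_of_mem_Ico (hα : Irrational α) (hn : 2 ≤ n) (ha : 2 ≤ cfA α n)
    (ha' : 2 ≤ cfA α (n + 1)) {t : ℝ} (ht : ((cfQ α (n + 1) - cfQ α n : ℤ) : ℝ) ≤ t)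
    (ht' : t < ((cfQ α (n + 1) + cfQ α n : ℤ) : ℝ)) :
    psi2Fn α t = |cfErr α n| + |cfErr α (n + 1)| := by
  have hQ := one_le_cfQ hα (by omega : 1 ≤ n)
  have hsub := cfQ_lt_cfQ_succ_sub hα hn ha
  refine le_antisymm ?_ (le_psi2Fn hα ?_ fun p q hq hqt hpq => ?_)
  · rw [← abs_cfQ_sub_mul_sub hα]
    exact psi2Fn_le (by omega) ht (not_isConvergentPair_of_lt_of_lt hα hsub (by omega))
  · exact le_trans (by exact_mod_cast (by omega : 1 ≤ cfQ α (n + 1) - cfQ α n)) ht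
  · have hq' : q < cfQ α (n + 1) + cfQ α n := by exact_mod_cast hqt.trans_lt ht'
    rcases eq_sub_or_le_abs_sub hα (by omega) ha' hq hq' hpq with ⟨rfl, rfl⟩ | h
    · exact (abs_cfQ_sub_mul_sub hα).ge
    · linarith [abs_nonneg (cfErr α (n + 1))]

theorem le_psi2Fn_of_lt_cfQ_sub (hα : Irrational α) (hn : 1 ≤ n) (ha' : 2 ≤ cfA α (n + 1))
    {t : ℝ} (ht : 1 ≤ t) (ht' : t < ((cfQ α (n + 1) - cfQ α n : ℤ) : ℝ)) :
    |cfErr α n| + 2 * |cfErr α (n + 1)| ≤ psi2Fn α t :=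
  le_psi2Fn hα ht fun p q hq hqt hpq => by
    have hq' : q < cfQ α (n + 1) - cfQ α n := by exact_mod_cast hqt.trans_lt ht'
    have hQ := one_le_cfQ hα hn
    rcases eq_sub_or_le_abs_sub hα hn ha' hq (by omega) hpq with ⟨-, rfl⟩ | h
    · exact absurd hq' (lt_irrefl _)
    · exact h

theorem psi2Fn_cfQ_add_lt (hα : Irrational α) (hn : 1 ≤ n) (ha' : 2 ≤ cfA α (n + 1)) :
    psi2Fn α ((cfQ α (n + 1) + cfQ α n : ℤ) : ℝ) < |cfErr α n| + |cfErr α (n + 1)| := by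
  have hQ := one_le_cfQ hα hn
  have hQ' := one_le_cfQ hα (Nat.le_add_left 1 n)
  calc psi2Fn α ((cfQ α (n + 1) + cfQ α n : ℤ) : ℝ) ≤ |cfErr α n| - |cfErr α (n + 1)| := by
        rw [← abs_cfQ_add_mul_sub hα]
        exact psi2Fn_le (by omega) le_rfl
          (not_isConvergentPair_of_lt_of_lt hα (k := n + 1) (by omega) (cfQ_succ_add_lt hα ha'))
    _ < |cfErr α n| + |cfErr α (n + 1)| := by
        linarith [abs_pos.2 (cfErr_ne_zero hα (n + 1))]

theorem cfQ_sub_mem_QSet (hα : Irrational α) (hn : 2 ≤ n) (ha : 2 ≤ cfA α n)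
    (ha' : 2 ≤ cfA α (n + 1)) : cfQ α (n + 1) - cfQ α n ∈ QSet α := by
  have hQ := one_le_cfQ hα (by omega : 1 ≤ n)
  have hsub := cfQ_lt_cfQ_succ_sub hα hn ha
  have hm : (2 : ℝ) ≤ ((cfQ α (n + 1) - cfQ α n : ℤ) : ℝ) := by exact_mod_cast (by omega)
  refine ⟨by omega, not_continuousAt_of_lt_of_eventually
    (c := |cfErr α n| + 2 * |cfErr α (n + 1)|) ?_ ?_⟩
  · rw [psi2Fn_eq_of_mem_Ico hα hn ha ha' le_rfl (by exact_mod_cast (by omega))]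
    linarith [abs_pos.2 (cfErr_ne_zero hα (n + 1))]
  · filter_upwards [Ioo_mem_nhdsLT (sub_one_lt _)] with t ht
    exact le_psi2Fn_of_lt_cfQ_sub hα (by omega) ha' (by linarith [ht.1]) ht.2

theorem cfQ_add_mem_QSet (hα : Irrational α) (hn : 2 ≤ n) (ha : 2 ≤ cfA α n)
    (ha' : 2 ≤ cfA α (n + 1)) : cfQ α (n + 1) + cfQ α n ∈ QSet α := by
  have hQ := one_le_cfQ hα (by omega : 1 ≤ n)
  have hQ' := one_le_cfQ hα (Nat.le_add_left 1 n)
  refine ⟨by omega, not_continuousAt_of_lt_of_eventually (psi2Fn_cfQ_add_lt hα (by omega) ha') ?_⟩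
  filter_upwards [Ioo_mem_nhdsLT (show ((cfQ α (n + 1) - cfQ α n : ℤ) : ℝ) < _ by
    exact_mod_cast (by omega : cfQ α (n + 1) - cfQ α n < cfQ α (n + 1) + cfQ α n))] with t ht
  exact (psi2Fn_eq_of_mem_Ico hα hn ha ha' ht.1.le ht.2).ge

theorem notMem_QSet_of_lt_of_lt (hα : Irrational α) (hn : 2 ≤ n) (ha : 2 ≤ cfA α n)
    (ha' : 2 ≤ cfA α (n + 1)) {z : ℤ} (h₁ : cfQ α (n + 1) - cfQ α n < z)
    (h₂ : z < cfQ α (n + 1) + cfQ α n) : z ∉ QSet α := by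
  rintro ⟨-, hz⟩
  have h₁' : ((cfQ α (n + 1) - cfQ α n : ℤ) : ℝ) ≤ z - 1 := by
    exact_mod_cast (by omega : cfQ α (n + 1) - cfQ α n ≤ z - 1)
  have h₂' : (z : ℝ) + 1 ≤ ((cfQ α (n + 1) + cfQ α n : ℤ) : ℝ) := by
    exact_mod_cast (by omega : z + 1 ≤ cfQ α (n + 1) + cfQ α n)
  refine hz (EventuallyEq.continuousAt (y := |cfErr α n| + |cfErr α (n + 1)|) ?_)
  filter_upwards [Ioo_mem_nhds (sub_one_lt (z : ℝ)) (lt_add_one (z : ℝ))] with t ht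
  exact psi2Fn_eq_of_mem_Ico hα hn ha ha' (by linarith [ht.1]) (by linarith [ht.2])

end SecondMinimum

theorem stmt12_general (α : ℝ) (hα : Irrational α)
    (n : ℕ) (hn : 3 ≤ n) (ha : 2 ≤ cfA α n) (ha' : 2 ≤ cfA α (n + 1)) :
    SuccessiveIn (QSet α)
      [cfDen α n - cfDen α (n - 1), cfDen α n + cfDen α (n - 1)] := by
  have hn₂ : 2 ≤ n := by omega
  have hden : cfDen α (n - 1) = cfQ α n := by rw [cfDen, Nat.sub_add_cancel (by omega)]
  rw [hden, successiveIn_pair_iff]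
  have hQ := one_le_cfQ hα (by omega : 1 ≤ n)
  exact ⟨cfQ_sub_mem_QSet hα hn₂ ha ha', cfQ_add_mem_QSet hα hn₂ ha ha', by unfold cfDen; omega,
    fun z hz ⟨h₁, h₂⟩ => notMem_QSet_of_lt_of_lt hα hn₂ ha ha' h₁ h₂ hz⟩

/-- Let `α ∈ (0,1)` be irrational, `n ≥ 3`, `aₙ ≥ 2` and `a_{n+1} ≥ 2`.
Then `qₙ − q_{n-1}` and `qₙ + q_{n-1}` are two successive elements of `𝔔(α)`. -/
theorem stmt12 (α : ℝ) (hα : Irrational α) (h0 : 0 < α) (h1 : α < 1)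
    (n : ℕ) (hn : 3 ≤ n) (ha : 2 ≤ cfA α n) (ha' : 2 ≤ cfA α (n + 1)) :
    SuccessiveIn (QSet α)
      [cfDen α n - cfDen α (n - 1), cfDen α n + cfDen α (n - 1)] :=
  stmt12_general α hα n hn ha ha'
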